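/- For every strategy σ ∈ Σ^Opt and every finite path ρ with P_{σ,s₀}(ρ) > 0 (where s₀ is the first state of ρ), Pr_{σ_ρ, last(ρ)}(□¬Bad) = 1 if and only if last(ρ) ∈ Good. -/

import Mathlib

open scoped ENNReal NNReal Classical
open Filter

universe u v

variable {S : Type u} {A : Type v}

/-- A finite MDP: `P s a = some d` means action `a` is legal at `s` and `d` is a
probability distribution on `S`; every state has at least one legal action. -/
structure MDP (S : Type u) (A : Type v) [Fintype S] [Fintype A] where
  P : S → A → Option (S → NNReal)
  sum_one : ∀ s a d, P s a = some d → (∑ s', d s') = 1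
  exists_legal : ∀ s, ∃ a, (P s a).isSome

/-- Last state of an alternating path starting at `s` with steps `steps`. -/
def lastState : S → List (A × S) → S
  | s, [] => s
  | _, (_, s') :: rest => lastState s' rest

/-- A finite path: a start state together with a list of (action, next-state) steps. -/
structure FPath (S : Type u) (A : Type v) where
  start : S
  steps : List (A × S)

namespace FPath

def last (ρ : FPath S A) : S := lastState ρ.start ρ.steps

def states (ρ : FPath S A) : List S := ρ.start :: ρ.steps.map Prod.snd

def length (ρ : FPath S A) : ℕ := ρ.steps.length

end FPath

/-- A (raw) strategy: maps each finite path (start state + steps) to a distribution on actions. -/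
def Strat (S : Type u) (A : Type v) := S → List (A × S) → A → ℝ≥0∞

/-- Shifted strategy `σ_ρ` for `ρ = (s₀, pre)`: `σ_ρ(ρ') = σ(ρ·ρ')`. -/
def shiftStrat (σ : Strat S A) (s₀ : S) (pre : List (A × S)) : Strat S A :=
  fun _ steps a => σ s₀ (pre ++ steps) a

/-- Generic cylinder weight (product of strategy- and transition-probabilities along the
steps), relative to a transition kernel `p`. The accumulator `pre` is the path-prefix so far. -/
noncomputable def wtP (p : S → A → S → ℝ≥0∞) (σ : Strat S A) (s₀ : S) :
    List (A × S) → List (A × S) → ℝ≥0∞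
  | _, [] => 1
  | pre, (a, s') :: rest =>
      σ s₀ pre a * p (lastState s₀ pre) a s' * wtP p σ s₀ (pre ++ [(a, s')]) rest
  termination_by pre l => l.length

/-- Generic cylinder probability of path `ρ` from start state `s`, kernel `p`. -/
noncomputable def cylProbP (p : S → A → S → ℝ≥0∞) (σ : Strat S A) (s : S) (ρ : FPath S A) :
    ℝ≥0∞ :=
  if ρ.start = s then wtP p σ ρ.start [] ρ.steps else 0

namespace MDP

variable [Fintype S] [Fintype A]

def legal (M : MDP S A) (s : S) (a : A) : Prop := (M.P s a).isSome

noncomputable def prob (M : MDP S A) (s : S) (a : A) (s' : S) : ℝ≥0∞ :=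
  (M.P s a).elim 0 fun d => (d s' : ℝ≥0∞)

/-- `ρ` is a finite path of `M` from `s`: every action legal, every transition of
positive probability. -/
def IsPathFrom (M : MDP S A) : S → List (A × S) → Prop
  | _, [] => True
  | s, (a, s') :: rest => M.legal s a ∧ 0 < M.prob s a s' ∧ M.IsPathFrom s' rest

def IsPath (M : MDP S A) (ρ : FPath S A) : Prop := M.IsPathFrom ρ.start ρ.steps

/-- `σ` is a strategy: at every finite path it gives a probability distribution on actions
supported on actions legal at the last state. -/
def IsStrategy (M : MDP S A) (σ : Strat S A) : Prop :=
  ∀ s steps, M.IsPathFrom s steps →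
    (∑ a, σ s steps a) = 1 ∧ ∀ a, 0 < σ s steps a → M.legal (lastState s steps) a

/-- Cylinder probability `P_{σ,s}(ρ)` in `M`. -/
noncomputable def cylProb (M : MDP S A) (σ : Strat S A) (s : S) (ρ : FPath S A) : ℝ≥0∞ :=
  cylProbP M.prob σ s ρ

/-- `T` is a set of sink states: each `t ∈ T` has exactly one legal action, leading back
to `t` with probability `1`. -/
def SinkSet (M : MDP S A) (T : Set S) : Prop :=
  ∀ t ∈ T, (∃! a, M.legal t a) ∧ ∀ a, M.legal t a → M.prob t a t = 1

/-- Generic pruned finite-path predicate: all states have positive value `v` and every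
step uses an `opt` state-action pair with positive transition probability in `M`. -/
def IsPathFromPruned (M : MDP S A) (v : S → ℝ≥0∞) (opt : S → A → Prop) :
    S → List (A × S) → Prop
  | s, [] => 0 < v s
  | s, (a, s') :: rest =>
      0 < v s ∧ opt s a ∧ 0 < M.prob s a s' ∧ M.IsPathFromPruned v opt s' rest

/-! ### Reachability -/

/-- `ρ` is a `T`-hitting path: its last state lies in `T` and no other state does. -/
def HitsFirst (T : Set S) (ρ : FPath S A) : Prop :=
  ρ.last ∈ T ∧ ∀ x ∈ ρ.states.dropLast, x ∉ T

/-- `Pr_{σ,s}(◊T)`: sum over `T`-hitting paths starting at `s` of their cylinder probabilities. -/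
noncomputable def prReach (M : MDP S A) (σ : Strat S A) (s : S) (T : Set S) : ℝ≥0∞ :=
  ∑' ρ : {ρ : FPath S A // M.IsPath ρ ∧ HitsFirst T ρ ∧ ρ.start = s}, M.cylProb σ s ρ.1

/-- `Val(s)` for reachability: supremum over strategies of `Pr_{σ,s}(◊T)`. -/
noncomputable def reachVal (M : MDP S A) (T : Set S) (s : S) : ℝ≥0∞ :=
  ⨆ (σ : Strat S A) (_ : M.IsStrategy σ), M.prReach σ s T

/-- `(s,a) ∈ Opt` for reachability. -/
def OptR (M : MDP S A) (T : Set S) (s : S) (a : A) : Prop :=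
  M.legal s a ∧ M.reachVal T s = ∑ s', M.prob s a s' * M.reachVal T s'

/-- `σ ∈ Σ^Opt` for reachability. -/
def SigmaOptR (M : MDP S A) (T : Set S) (σ : Strat S A) : Prop :=
  ∀ s steps, M.IsPathFrom s steps → ∀ a, 0 < σ s steps a → M.OptR T (lastState s steps) a

/-- Transition probabilities of the pruned MDP `M'` for reachability. -/
noncomputable def probR' (M : MDP S A) (T : Set S) (s : S) (a : A) (s' : S) : ℝ≥0∞ :=
  if M.OptR T s a ∧ 0 < M.reachVal T s then
    M.prob s a s' * M.reachVal T s' / M.reachVal T s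
  else 0

/-- `ρ` is a finite path of the pruned MDP `M'` (reachability version). -/
def IsPathR' (M : MDP S A) (T : Set S) (ρ : FPath S A) : Prop :=
  M.IsPathFromPruned (M.reachVal T) (M.OptR T) ρ.start ρ.steps

/-- Cylinder probability `P'_{σ,s}(ρ)` in the pruned MDP `M'` (reachability version). -/
noncomputable def cylProbR' (M : MDP S A) (T : Set S) (σ : Strat S A) (s : S) (ρ : FPath S A) :
    ℝ≥0∞ :=
  cylProbP (M.probR' T) σ s ρ

/-- `Pr'_{σ,s}(◊T)` in the pruned MDP `M'`. -/
noncomputable def prReach' (M : MDP S A) (σ : Strat S A) (s : S) (T : Set S) : ℝ≥0∞ :=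
  ∑' ρ : {ρ : FPath S A // M.IsPathR' T ρ ∧ HitsFirst T ρ ∧ ρ.start = s},
    M.cylProbR' T σ s ρ.1

/-- Probability of hitting `T` for the first time in exactly `r` steps, in `M`. -/
noncomputable def hitLenProb (M : MDP S A) (σ : Strat S A) (s : S) (T : Set S) (r : ℕ) :
    ℝ≥0∞ :=
  ∑' ρ : {ρ : FPath S A // M.IsPath ρ ∧ HitsFirst T ρ ∧ ρ.start = s ∧ ρ.length = r},
    M.cylProb σ s ρ.1

/-- Probability of hitting `T` for the first time in exactly `r` steps, in `M'`. -/
noncomputable def hitLenProb' (M : MDP S A) (σ : Strat S A) (s : S) (T : Set S) (r : ℕ) :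
    ℝ≥0∞ :=
  ∑' ρ : {ρ : FPath S A // M.IsPathR' T ρ ∧ HitsFirst T ρ ∧ ρ.start = s ∧ ρ.length = r},
    M.cylProbR' T σ s ρ.1

/-- Conditional expected length to target `E_{σ,s}(len_T | ◊T)`. -/
noncomputable def condExpLen (M : MDP S A) (σ : Strat S A) (s : S) (T : Set S) : ℝ≥0∞ :=
  ∑' r : ℕ, (r : ℝ≥0∞) * M.hitLenProb σ s T r / M.prReach σ s T

/-- Expected length to target in `M'`, `E'_{σ,s}(len_T)`; `∞` unless `Pr'_{σ,s}(◊T) = 1`. -/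
noncomputable def expLen' (M : MDP S A) (σ : Strat S A) (s : S) (T : Set S) : ℝ≥0∞ :=
  if M.prReach' σ s T = 1 then ∑' r : ℕ, (r : ℝ≥0∞) * M.hitLenProb' σ s T r else ⊤

/-! ### Safety -/

/-- `Safe_n(σ,s)`: probability of the paths of length `n` from `s` avoiding `Bad`. -/
noncomputable def safeN (M : MDP S A) (σ : Strat S A) (s : S) (Bad : Set S) (n : ℕ) : ℝ≥0∞ :=
  ∑' ρ : {ρ : FPath S A //
      M.IsPath ρ ∧ ρ.start = s ∧ ρ.length = n ∧ ∀ x ∈ ρ.states, x ∉ Bad},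
    M.cylProb σ s ρ.1

/-- `Pr_{σ,s}(□¬Bad) := ⨅ n, Safe_n(σ,s)`. -/
noncomputable def prSafe (M : MDP S A) (σ : Strat S A) (s : S) (Bad : Set S) : ℝ≥0∞ :=
  ⨅ n : ℕ, M.safeN σ s Bad n

/-- `Val(s)` for safety: supremum over strategies of `Pr_{σ,s}(□¬Bad)`. -/
noncomputable def safeVal (M : MDP S A) (Bad : Set S) (s : S) : ℝ≥0∞ :=
  ⨆ (σ : Strat S A) (_ : M.IsStrategy σ), M.prSafe σ s Bad

/-- `(s,a) ∈ Opt` for safety. -/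
def OptS (M : MDP S A) (Bad : Set S) (s : S) (a : A) : Prop :=
  M.legal s a ∧ M.safeVal Bad s = ∑ s', M.prob s a s' * M.safeVal Bad s'

/-- `σ ∈ Σ^Opt` for safety. -/
def SigmaOptS (M : MDP S A) (Bad : Set S) (σ : Strat S A) : Prop :=
  ∀ s steps, M.IsPathFrom s steps → ∀ a, 0 < σ s steps a → M.OptS Bad (lastState s steps) a

/-- `UPreⁱ(Bad)`. -/
def UPre (M : MDP S A) (Bad : Set S) : ℕ → Set S
  | 0 => Bad
  | i + 1 => {s | ∀ a, M.legal s a → ∃ s' ∈ M.UPre Bad i, 0 < M.prob s a s'}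

/-- `Good := S \ UPre*(Bad)`. -/
def GoodSet (M : MDP S A) (Bad : Set S) : Set S := (⋃ i, M.UPre Bad i)ᶜ

/-- `V := S \ (Good ∪ Bad)`. -/
def VSet (M : MDP S A) (Bad : Set S) : Set S := (M.GoodSet Bad ∪ Bad)ᶜ

/-- `Pr_{σ,s}(GoodCyl(ρ)) := P_{σ,s}(ρ) · Pr_{σ_ρ, last(ρ)}(□¬Bad)`. -/
noncomputable def goodCyl (M : MDP S A) (σ : Strat S A) (s : S) (Bad : Set S) (ρ : FPath S A) :
    ℝ≥0∞ :=
  M.cylProb σ s ρ * M.prSafe (shiftStrat σ ρ.start ρ.steps) ρ.last Bad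

/-- Transition probabilities of the pruned MDP `M'` for safety. -/
noncomputable def probS' (M : MDP S A) (Bad : Set S) (s : S) (a : A) (s' : S) : ℝ≥0∞ :=
  if M.OptS Bad s a ∧ 0 < M.safeVal Bad s then
    M.prob s a s' * M.safeVal Bad s' / M.safeVal Bad s
  else 0

/-- `ρ` is a finite path of the pruned MDP `M'` (safety version). -/
def IsPathS' (M : MDP S A) (Bad : Set S) (ρ : FPath S A) : Prop :=
  M.IsPathFromPruned (M.safeVal Bad) (M.OptS Bad) ρ.start ρ.steps

/-- Cylinder probability `P'_{σ,s}(ρ)` in the pruned MDP `M'` (safety version). -/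
noncomputable def cylProbS' (M : MDP S A) (Bad : Set S) (σ : Strat S A) (s : S)
    (ρ : FPath S A) : ℝ≥0∞ :=
  cylProbP (M.probS' Bad) σ s ρ

end MDP

/-- `Reward_n(ρ) = ∑_{i<n} R(sᵢ, aᵢ)` for `ρ` starting at `s` with steps `steps`. -/
def rewardOf (R : S → A → ℝ) : S → List (A × S) → ℝ
  | _, [] => 0
  | s, (a, s') :: rest => R s a + rewardOf R s' rest

namespace MDP

variable [Fintype S] [Fintype A]

/-- `E'_{σ,s}(Reward_n)` in the pruned MDP `M'` (safety version). -/
noncomputable def expRewN' (M : MDP S A) (Bad : Set S) (R : S → A → ℝ) (σ : Strat S A)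
    (s : S) (n : ℕ) : ℝ :=
  ∑' ρ : {ρ : FPath S A // M.IsPathS' Bad ρ ∧ ρ.start = s ∧ ρ.length = n},
    (M.cylProbS' Bad σ s ρ.1).toReal * rewardOf R ρ.1.start ρ.1.steps

/-- `E'_{σ,s}(MP) := liminf_n (1/n)·E'_{σ,s}(Reward_n)`. -/
noncomputable def mp' (M : MDP S A) (Bad : Set S) (R : S → A → ℝ) (σ : Strat S A) (s : S) :
    ℝ :=
  Filter.atTop.liminf fun n : ℕ => M.expRewN' Bad R σ s n / n

/-- `E_{σ,s}(Reward_n | □¬Bad)`. -/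
noncomputable def condExpRewN (M : MDP S A) (Bad : Set S) (R : S → A → ℝ) (σ : Strat S A)
    (s : S) (n : ℕ) : ℝ :=
  (∑' ρ : {ρ : FPath S A // M.IsPath ρ ∧ ρ.start = s ∧ ρ.length = n},
    (M.goodCyl σ s Bad ρ.1).toReal * rewardOf R ρ.1.start ρ.1.steps) /
  (M.prSafe σ s Bad).toReal

/-- `E_{σ,s}(MP | □¬Bad) := liminf_n (1/n)·E_{σ,s}(Reward_n | □¬Bad)`. -/
noncomputable def condMP (M : MDP S A) (Bad : Set S) (R : S → A → ℝ) (σ : Strat S A)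
    (s : S) : ℝ :=
  Filter.atTop.liminf fun n : ℕ => M.condExpRewN Bad R σ s n / n

end MDP

/-!
If `s ∈ UPreⁱ(Bad)`, every legal action at `s` reaches `UPreⁱ⁻¹(Bad)` with probability at least
the least positive transition probability `δ`, so every strategy has `Safe_i ≤ 1 - δⁱ` from `s`.
Conversely, on `Good` some action keeps the play in `Good` surely, so `Val = 1` there, and an
optimal action at a state of value `1` only leads to states of value `1`, none of which is bad.
-/

section WeightedSum

variable {ι : Type*} [Fintype ι] {w f : ι → ℝ≥0∞}

theorem sum_mul_le_one_of_le_one (hw : ∑ i, w i = 1) (hf : ∀ i, w i ≠ 0 → f i ≤ 1) :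
    ∑ i, w i * f i ≤ 1 :=
  calc ∑ i, w i * f i ≤ ∑ i, w i := Finset.sum_le_sum fun i _ => by
        by_cases hi : w i = 0
        · simp [hi]
        · exact mul_le_of_le_one_right' (hf i hi)
    _ = 1 := hw

theorem sum_mul_eq_one_of_eq_one (hw : ∑ i, w i = 1) (hf : ∀ i, w i ≠ 0 → f i = 1) :
    ∑ i, w i * f i = 1 := by
  rw [← hw]
  refine Finset.sum_congr rfl fun i _ => ?_
  by_cases hi : w i = 0
  · simp [hi]
  · simp [hf i hi]

theorem sum_mul_add_mul_le_one (hw : ∑ i, w i = 1) (hf : ∀ i, w i ≠ 0 → f i ≤ 1) {j : ι}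
    {c : ℝ≥0∞} (hj : f j + c ≤ 1) : ∑ i, w i * f i + w j * c ≤ 1 := by
  have hsplit : ∑ i, w i * f i + w j * c = ∑ i, w i * (f i + if i = j then c else 0) := by
    simp [mul_add, Finset.sum_add_distrib]
  rw [hsplit]
  refine sum_mul_le_one_of_le_one hw fun i hi => ?_
  split_ifs with hij
  · exact hij ▸ hj
  · simpa using hf i hi

theorem eq_one_of_sum_mul_eq_one (hw : ∑ i, w i = 1) (hf : ∀ i, f i ≤ 1)
    (h : ∑ i, w i * f i = 1) {j : ι} (hj : w j ≠ 0) : f j = 1 := by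
  have hle := sum_mul_add_mul_le_one hw (fun i _ => hf i) (add_tsub_cancel_of_le (hf j)).le
  rw [h] at hle
  have h0 : w j * (1 - f j) ≤ 0 :=
    (ENNReal.add_le_add_iff_left ENNReal.one_ne_top).1 (by simpa using hle)
  rcases mul_eq_zero.1 (nonpos_iff_eq_zero.1 h0) with h | h
  · exact absurd h hj
  · exact le_antisymm (hf j) (tsub_eq_zero_iff_le.1 h)

end WeightedSum

theorem lastState_append (s : S) (l₁ l₂ : List (A × S)) :
    lastState s (l₁ ++ l₂) = lastState (lastState s l₁) l₂ := by
  induction l₁ generalizing s with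
  | nil => rfl
  | cons x xs ih => exact ih x.2

theorem wtP_shiftStrat (p : S → A → S → ℝ≥0∞) (σ : Strat S A) (s₀ : S)
    (pre₀ l pre : List (A × S)) :
    wtP p (shiftStrat σ s₀ pre₀) (lastState s₀ pre₀) pre l = wtP p σ s₀ (pre₀ ++ pre) l := by
  induction l generalizing pre with
  | nil => rw [wtP, wtP]
  | cons x xs ih =>
    rw [wtP, wtP, ih, List.append_assoc, lastState_append]
    rfl

namespace MDP

variable [Fintype S] [Fintype A] {M : MDP S A} {Bad G : Set S} {σ : Strat S A}
  {s s' : S} {a : A} {pre : List (A × S)}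

theorem IsPathFrom.append {l₁ l₂ : List (A × S)} (h₁ : M.IsPathFrom s l₁)
    (h₂ : M.IsPathFrom (lastState s l₁) l₂) : M.IsPathFrom s (l₁ ++ l₂) := by
  induction l₁ generalizing s with
  | nil => exact h₂
  | cons x xs ih => exact ⟨h₁.1, h₁.2.1, ih h₁.2.2 h₂⟩

theorem legal_of_prob_pos (h : 0 < M.prob s a s') : M.legal s a := by
  unfold prob at h
  unfold legal
  cases hP : M.P s a <;> simp_all

theorem sum_prob_eq_one (h : M.legal s a) : ∑ s', M.prob s a s' = 1 := by
  obtain ⟨d, hd⟩ := Option.isSome_iff_exists.mp h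
  simp [prob, hd, ← ENNReal.ofNNReal_finsetSum, M.sum_one s a d hd]

variable (M) in
theorem exists_pos_le_prob :
    ∃ δ : ℝ≥0∞, 0 < δ ∧ δ ≤ 1 ∧ ∀ s a s', 0 < M.prob s a s' → δ ≤ M.prob s a s' := by
  let f : S × A × S → ℝ≥0∞ := fun x =>
    if 0 < M.prob x.1 x.2.1 x.2.2 then M.prob x.1 x.2.1 x.2.2 else 1
  refine ⟨min 1 (Finset.univ.inf f), ?_, min_le_left _ _, fun s a s' hp => ?_⟩
  · refine lt_min zero_lt_one ((Finset.lt_inf_iff ENNReal.zero_lt_top).2 fun x _ => ?_)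
    by_cases hx : 0 < M.prob x.1 x.2.1 x.2.2 <;> simp [f, hx]
  · exact (min_le_right _ _).trans
      ((Finset.inf_le (Finset.mem_univ (s, a, s'))).trans (by simp [f, hp]))

-- `shiftStrat` ignores its start state, so a shifted strategy is a strategy only from `last ρ`.
variable (M) in
def IsStrategyFrom (σ : Strat S A) (s : S) : Prop :=
  ∀ steps, M.IsPathFrom s steps →
    (∑ a, σ s steps a) = 1 ∧ ∀ a, 0 < σ s steps a → M.legal (lastState s steps) a

variable (M) in
def PlaysFrom (σ : Strat S A) (s : S) (q : S → A → Prop) : Prop :=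
  ∀ steps, M.IsPathFrom s steps → ∀ a, 0 < σ s steps a → q (lastState s steps) a

variable (M) in
def KeepsIn (G : Set S) (t : S) (a : A) : Prop :=
  t ∈ G → ∀ s', 0 < M.prob t a s' → s' ∈ G

namespace IsStrategyFrom

theorem sum_eq_one (h : M.IsStrategyFrom σ s) : ∑ a, σ s [] a = 1 := (h [] trivial).1

theorem legal (h : M.IsStrategyFrom σ s) (ha : σ s [] a ≠ 0) : M.legal s a :=
  (h [] trivial).2 a (pos_iff_ne_zero.2 ha)

theorem shift (h : M.IsStrategyFrom σ s) (hpre : M.IsPathFrom s pre) :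
    M.IsStrategyFrom (shiftStrat σ s pre) (lastState s pre) := fun steps hsteps => by
  have := h (pre ++ steps) (hpre.append hsteps)
  rwa [lastState_append] at this

theorem shift_step (h : M.IsStrategyFrom σ s) (hp : 0 < M.prob s a s') :
    M.IsStrategyFrom (shiftStrat σ s [(a, s')]) s' :=
  h.shift (pre := [(a, s')]) ⟨legal_of_prob_pos hp, hp, trivial⟩

end IsStrategyFrom

namespace PlaysFrom

variable {q q' : S → A → Prop}

theorem apply (h : M.PlaysFrom σ s q) (ha : σ s [] a ≠ 0) : q s a :=
  h [] trivial a (pos_iff_ne_zero.2 ha)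

theorem mono (h : M.PlaysFrom σ s q) (hq : ∀ t a, q t a → q' t a) : M.PlaysFrom σ s q' :=
  fun steps hsteps a ha => hq _ a (h steps hsteps a ha)

theorem shift (h : M.PlaysFrom σ s q) (hpre : M.IsPathFrom s pre) :
    M.PlaysFrom (shiftStrat σ s pre) (lastState s pre) q := fun steps hsteps => by
  have := h (pre ++ steps) (hpre.append hsteps)
  rwa [lastState_append] at this

theorem shift_step (h : M.PlaysFrom σ s q) (hp : 0 < M.prob s a s') :
    M.PlaysFrom (shiftStrat σ s [(a, s')]) s' q :=
  h.shift (pre := [(a, s')]) ⟨legal_of_prob_pos hp, hp, trivial⟩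

end PlaysFrom

variable (M) in
noncomputable def safeWeight (Bad : Set S) (σ : Strat S A) (s : S) (n : ℕ)
    (l : List (A × S)) : ℝ≥0∞ :=
  if M.IsPathFrom s l ∧ l.length = n ∧ ∀ x ∈ s :: l.map Prod.snd, x ∉ Bad then
    wtP M.prob σ s [] l else 0

theorem safeN_eq_tsum_safeWeight (n : ℕ) :
    M.safeN σ s Bad n = ∑' l, M.safeWeight Bad σ s n l := by
  set Q : Set (FPath S A) :=
    {ρ | M.IsPath ρ ∧ ρ.start = s ∧ ρ.length = n ∧ ∀ x ∈ ρ.states, x ∉ Bad}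
  have hinj : Function.Injective (FPath.mk s : List (A × S) → FPath S A) :=
    fun _ _ h => (FPath.mk.inj h).2
  calc M.safeN σ s Bad n = ∑' ρ, Q.indicator (M.cylProb σ s) ρ := tsum_subtype Q _
    _ = ∑' l, Q.indicator (M.cylProb σ s) (FPath.mk s l) := by
      refine (hinj.tsum_eq fun ρ hρ => ⟨ρ.steps, ?_⟩).symm
      obtain ⟨-, hstart, -⟩ := Set.mem_of_indicator_ne_zero hρ
      rw [← hstart]
    _ = ∑' l, M.safeWeight Bad σ s n l := by
      refine tsum_congr fun l => ?_
      simp [Q, Set.indicator_apply, safeWeight, cylProb, cylProbP, IsPath, FPath.states,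
        FPath.length]

theorem safeWeight_cons (hs : s ∉ Bad) (n : ℕ) (a : A) (s' : S) (l : List (A × S)) :
    M.safeWeight Bad σ s (n + 1) ((a, s') :: l) =
      σ s [] a * (M.prob s a s' * M.safeWeight Bad (shiftStrat σ s [(a, s')]) s' n l) := by
  by_cases hp : 0 < M.prob s a s'
  · have hwt : wtP M.prob σ s [] ((a, s') :: l) =
        σ s [] a * M.prob s a s' * wtP M.prob (shiftStrat σ s [(a, s')]) s' [] l := by
      have hshift := wtP_shiftStrat M.prob σ s [(a, s')] l []
      rw [List.append_nil] at hshift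
      rw [wtP, List.nil_append, ← hshift]
      rfl
    simp only [safeWeight, IsPathFrom, legal_of_prob_pos hp, hp, true_and, List.length_cons,
      Nat.add_right_cancel_iff, List.map_cons, List.mem_cons, forall_eq_or_imp, hs,
      not_false_eq_true, hwt]
    split_ifs <;> simp [mul_assoc]
  · simp [safeWeight, IsPathFrom, nonpos_iff_eq_zero.1 (not_lt.1 hp)]

theorem safeN_succ (hs : s ∉ Bad) (n : ℕ) :
    M.safeN σ s Bad (n + 1) =
      ∑ a, σ s [] a * ∑ s', M.prob s a s' * M.safeN (shiftStrat σ s [(a, s')]) s' Bad n := by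
  have hinj : Function.Injective fun p : (A × S) × List (A × S) => p.1 :: p.2 :=
    fun _ _ h => Prod.ext (List.cons.inj h).1 (List.cons.inj h).2
  have hsupp : Function.support (M.safeWeight Bad σ s (n + 1)) ⊆
      Set.range fun p : (A × S) × List (A × S) => p.1 :: p.2 := by
    rintro (_ | ⟨x, l⟩) hl
    · simp [safeWeight] at hl
    · exact ⟨(x, l), rfl⟩
  rw [safeN_eq_tsum_safeWeight, ← hinj.tsum_eq hsupp, ENNReal.tsum_prod', tsum_fintype,
    Fintype.sum_prod_type]
  simp only [safeWeight_cons hs, ENNReal.tsum_mul_left, Finset.mul_sum, safeN_eq_tsum_safeWeight]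

theorem safeN_of_mem (hs : s ∈ Bad) (n : ℕ) : M.safeN σ s Bad n = 0 := by
  simp [safeN_eq_tsum_safeWeight, safeWeight, hs]

theorem safeN_zero (hs : s ∉ Bad) : M.safeN σ s Bad 0 = 1 := by
  rw [safeN_eq_tsum_safeWeight, tsum_eq_single []]
  · simp [safeWeight, IsPathFrom, hs, wtP]
  · intro l hl
    simp [safeWeight, hl]

theorem safeN_le_one (hσ : M.IsStrategyFrom σ s) (n : ℕ) : M.safeN σ s Bad n ≤ 1 := by
  induction n generalizing s σ with
  | zero => by_cases hs : s ∈ Bad <;> simp [safeN_of_mem, safeN_zero, hs]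
  | succ n ih =>
    by_cases hs : s ∈ Bad
    · simp [safeN_of_mem hs]
    rw [safeN_succ hs]
    refine sum_mul_le_one_of_le_one hσ.sum_eq_one fun a ha => ?_
    exact sum_mul_le_one_of_le_one (sum_prob_eq_one (hσ.legal ha)) fun s' hs' =>
      ih (hσ.shift_step (pos_iff_ne_zero.2 hs'))

theorem prSafe_le_one (hσ : M.IsStrategyFrom σ s) : M.prSafe σ s Bad ≤ 1 :=
  (iInf_le _ 0).trans (safeN_le_one hσ 0)

theorem safeVal_le_one : M.safeVal Bad s ≤ 1 :=
  iSup₂_le fun _ hσ => prSafe_le_one (hσ s)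

theorem safeN_add_pow_le_one {δ : ℝ≥0∞} (hδ1 : δ ≤ 1)
    (hδ : ∀ s a s', 0 < M.prob s a s' → δ ≤ M.prob s a s') {i : ℕ} (hs : s ∈ M.UPre Bad i)
    (hσ : M.IsStrategyFrom σ s) : M.safeN σ s Bad i + δ ^ i ≤ 1 := by
  induction i generalizing s σ with
  | zero => simp [safeN_of_mem (show s ∈ Bad from hs)]
  | succ i ih =>
    by_cases hsB : s ∈ Bad
    · simpa [safeN_of_mem hsB] using pow_le_one' hδ1 (i + 1)
    have hstep : ∀ a, σ s [] a ≠ 0 → ∑ s', M.prob s a s' *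
        M.safeN (shiftStrat σ s [(a, s')]) s' Bad i + δ ^ (i + 1) ≤ 1 := by
      intro a ha
      obtain ⟨s₀, hs₀, hp₀⟩ := hs a (hσ.legal ha)
      calc ∑ s', M.prob s a s' * M.safeN (shiftStrat σ s [(a, s')]) s' Bad i + δ ^ (i + 1)
          ≤ ∑ s', M.prob s a s' * M.safeN (shiftStrat σ s [(a, s')]) s' Bad i +
              M.prob s a s₀ * δ ^ i := by
            rw [pow_succ']
            gcongr
            exact hδ _ _ _ hp₀
        _ ≤ 1 := sum_mul_add_mul_le_one (sum_prob_eq_one (hσ.legal ha))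
            (fun s' hs' => safeN_le_one (hσ.shift_step (pos_iff_ne_zero.2 hs')) i)
            (ih hs₀ (hσ.shift_step hp₀))
    rw [safeN_succ hsB]
    calc ∑ a, σ s [] a * ∑ s', M.prob s a s' * M.safeN (shiftStrat σ s [(a, s')]) s' Bad i
          + δ ^ (i + 1)
        = ∑ a, σ s [] a * (∑ s', M.prob s a s' * M.safeN (shiftStrat σ s [(a, s')]) s' Bad i
          + δ ^ (i + 1)) := by
          simp only [mul_add, Finset.sum_add_distrib, ← Finset.sum_mul, hσ.sum_eq_one, one_mul]
      _ ≤ 1 := sum_mul_le_one_of_le_one hσ.sum_eq_one hstep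

theorem prSafe_lt_one_of_mem_uPre {i : ℕ} (hs : s ∈ M.UPre Bad i)
    (hσ : M.IsStrategyFrom σ s) : M.prSafe σ s Bad < 1 := by
  obtain ⟨δ, hδ0, hδ1, hδ⟩ := M.exists_pos_le_prob
  have hsafe := safeN_add_pow_le_one hδ1 hδ hs hσ
  calc M.prSafe σ s Bad ≤ M.safeN σ s Bad i := iInf_le _ i
    _ < M.safeN σ s Bad i + δ ^ i :=
      ENNReal.lt_add_right (ne_top_of_le_ne_top ENNReal.one_ne_top (safeN_le_one hσ i))
        (pow_ne_zero i hδ0.ne')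
    _ ≤ 1 := hsafe

theorem mem_goodSet_of_prSafe_eq_one (hσ : M.IsStrategyFrom σ s) (h : M.prSafe σ s Bad = 1) :
    s ∈ M.GoodSet Bad := by
  simp only [GoodSet, Set.mem_compl_iff, Set.mem_iUnion, not_exists]
  exact fun i hi => (prSafe_lt_one_of_mem_uPre hi hσ).ne h

theorem uPre_mono (hBad : M.SinkSet Bad) : Monotone (M.UPre Bad) := by
  refine monotone_nat_of_le_succ fun i => ?_
  induction i with
  | zero => exact fun t ht a ha => ⟨t, ht, by simp [(hBad t ht).2 a ha]⟩
  | succ i ih => exact fun t ht a ha => (ht a ha).imp fun s' hs' => ⟨ih hs'.1, hs'.2⟩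

theorem exists_uPre_eq_iUnion (hBad : M.SinkSet Bad) :
    ∃ N, M.UPre Bad N = ⋃ i, M.UPre Bad i := by
  obtain ⟨N, hN⟩ := WellFoundedGT.monotone_chain_condition ⟨M.UPre Bad, uPre_mono hBad⟩
  refine ⟨N, subset_antisymm (Set.subset_iUnion _ N) (Set.iUnion_subset fun i => ?_)⟩
  rcases le_total i N with h | h
  · exact uPre_mono hBad h
  · exact (hN i h).ge

theorem notMem_of_mem_goodSet (hs : s ∈ M.GoodSet Bad) : s ∉ Bad :=
  fun hb => hs (Set.mem_iUnion_of_mem 0 hb)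

theorem exists_legal_keepsIn_goodSet (hBad : M.SinkSet Bad) (s : S) :
    ∃ a, M.legal s a ∧ M.KeepsIn (M.GoodSet Bad) s a := by
  by_cases hs : s ∈ M.GoodSet Bad
  · obtain ⟨N, hN⟩ := exists_uPre_eq_iUnion hBad
    have hs' : s ∉ M.UPre Bad (N + 1) := fun h => hs (Set.mem_iUnion_of_mem _ h)
    simp only [UPre, Set.mem_ofPred_eq, not_forall, not_exists, not_and] at hs'
    obtain ⟨a, ha, hall⟩ := hs'
    exact ⟨a, ha, fun _ s' hp hs'' => hall s' (hN ▸ hs'') hp⟩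
  · exact (M.exists_legal s).imp fun a ha => ⟨ha, fun h => absurd h hs⟩

theorem safeN_eq_one_of_keepsIn (hG : ∀ t ∈ G, t ∉ Bad) (hs : s ∈ G)
    (hσ : M.IsStrategyFrom σ s) (hkeep : M.PlaysFrom σ s (M.KeepsIn G))
    (n : ℕ) : M.safeN σ s Bad n = 1 := by
  induction n generalizing s σ with
  | zero => exact safeN_zero (hG s hs)
  | succ n ih =>
    rw [safeN_succ (hG s hs)]
    refine sum_mul_eq_one_of_eq_one hσ.sum_eq_one fun a ha =>
      sum_mul_eq_one_of_eq_one (sum_prob_eq_one (hσ.legal ha)) fun s' hs' => ?_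
    have hp := pos_iff_ne_zero.2 hs'
    exact ih (hkeep.apply ha hs s' hp) (hσ.shift_step hp) (hkeep.shift_step hp)

theorem prSafe_eq_one_of_keepsIn (hG : ∀ t ∈ G, t ∉ Bad) (hs : s ∈ G)
    (hσ : M.IsStrategyFrom σ s) (hkeep : M.PlaysFrom σ s (M.KeepsIn G)) :
    M.prSafe σ s Bad = 1 := by
  simp [prSafe, safeN_eq_one_of_keepsIn hG hs hσ hkeep]

noncomputable def memorylessStrat (c : S → A) : Strat S A :=
  fun s steps a => if a = c (lastState s steps) then 1 else 0

theorem playsFrom_memorylessStrat (c : S → A) (s : S) :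
    M.PlaysFrom (memorylessStrat c) s fun t a => a = c t := fun steps _ a ha => by
  by_contra h
  simp [memorylessStrat, h] at ha

theorem safeVal_eq_one_of_mem_goodSet (hBad : M.SinkSet Bad) (hs : s ∈ M.GoodSet Bad) :
    M.safeVal Bad s = 1 := by
  choose c hlegal hkeep using exists_legal_keepsIn_goodSet hBad
  have hc : M.IsStrategy (memorylessStrat c) := fun t steps hsteps =>
    ⟨by simp [memorylessStrat], fun a ha =>
      playsFrom_memorylessStrat c t steps hsteps a ha ▸ hlegal _⟩
  refine le_antisymm safeVal_le_one ?_
  rw [← prSafe_eq_one_of_keepsIn (fun _ => notMem_of_mem_goodSet) hs (hc s)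
    ((playsFrom_memorylessStrat c s).mono fun t a h => h ▸ hkeep t)]
  exact le_iSup₂ (f := fun σ (_ : M.IsStrategy σ) => M.prSafe σ s Bad) _ hc

theorem notMem_of_safeVal_eq_one (h : M.safeVal Bad s = 1) : s ∉ Bad := by
  intro hs
  have h0 : M.safeVal Bad s ≤ 0 :=
    iSup₂_le fun σ _ => (iInf_le _ 0).trans (safeN_of_mem (σ := σ) hs 0).le
  simp [h] at h0

theorem keepsIn_of_optS {t : S} (h : M.OptS Bad t a) :
    M.KeepsIn {s | M.safeVal Bad s = 1} t a := fun ht _ hp =>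
  eq_one_of_sum_mul_eq_one (f := M.safeVal Bad) (sum_prob_eq_one h.1) (fun _ => safeVal_le_one)
    (h.2.symm.trans ht) hp.ne'

end MDP

theorem stmt11_general {S : Type u} {A : Type v} [Fintype S] [Fintype A]
    (M : MDP S A) (Bad : Set S) (hBad : M.SinkSet Bad)
    (σ : Strat S A) (hσ : M.IsStrategy σ) (hopt : M.SigmaOptS Bad σ)
    (ρ : FPath S A) (hρ : M.IsPath ρ) :
    M.prSafe (shiftStrat σ ρ.start ρ.steps) ρ.last Bad = 1 ↔ ρ.last ∈ M.GoodSet Bad := by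
  have hσρ : M.IsStrategyFrom (shiftStrat σ ρ.start ρ.steps) ρ.last :=
    MDP.IsStrategyFrom.shift (hσ ρ.start) hρ
  refine ⟨MDP.mem_goodSet_of_prSafe_eq_one hσρ, fun hgood => ?_⟩
  refine MDP.prSafe_eq_one_of_keepsIn (G := {s | M.safeVal Bad s = 1})
    (fun _ => MDP.notMem_of_safeVal_eq_one) (MDP.safeVal_eq_one_of_mem_goodSet hBad hgood) hσρ ?_
  exact (MDP.PlaysFrom.shift (hopt ρ.start) hρ).mono fun _ _ => MDP.keepsIn_of_optS

/-- for `σ ∈ Σ^Opt` and every finite path `ρ` with `P_{σ,s₀}(ρ) > 0`,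
`Pr_{σ_ρ, last(ρ)}(□¬Bad) = 1` iff `last(ρ) ∈ Good`. -/
theorem stmt11 {S : Type u} {A : Type v} [Fintype S] [Fintype A] [Nonempty S] [Nonempty A]
    (M : MDP S A) (Bad : Set S) (hBad : M.SinkSet Bad)
    (σ : Strat S A) (hσ : M.IsStrategy σ) (hopt : M.SigmaOptS Bad σ)
    (ρ : FPath S A) (hρ : M.IsPath ρ) (hpos : 0 < M.cylProb σ ρ.start ρ) :
    M.prSafe (shiftStrat σ ρ.start ρ.steps) ρ.last Bad = 1 ↔ ρ.last ∈ M.GoodSet Bad :=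
  stmt11_general M Bad hBad σ hσ hopt ρ hρ
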